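/- Let s1 < s2 be keys in a linearly ordered type α, let T0 = node(s2, leaf(s1), leaf(s2)), and let ops be a list of operations all of whose keys are < s1. Then the tree obtained by applying the operations of ops to T0 in order is well-defined (in particular, whenever a delete edit is performed, the search path for its key contains at least one internal node), satisfies the BST property, and its set of leaf keys equals {s1, s2} ∪ F(ops). -/

import Mathlib

/-- Leaf-oriented binary trees: all keys are stored in the leaves; internal nodes
carry routing keys. -/
inductive LTree (α : Type) where
  | leaf (k : α)
  | node (k : α) (l r : LTree α)

/-- A direction (left or right child) in a binary tree. -/
inductive TDir where
  | left
  | right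
  deriving DecidableEq

namespace LTree

variable {α : Type} [LinearOrder α]

/-- The set of all keys (of leaves and internal nodes) occurring in the tree. -/
def keys : LTree α → Set α
  | leaf k => {k}
  | node m l r => {m} ∪ l.keys ∪ r.keys

/-- The set of keys appearing at the leaves of the tree. -/
def leafKeys : LTree α → Set α
  | leaf k => {k}
  | node _ l r => l.leafKeys ∪ r.leafKeys

/-- The BST property for leaf-oriented trees: at every internal node `node m l r`,
every key occurring in `l` is `< m` and every key occurring in `r` is `≥ m`. -/
def IsBST : LTree α → Prop
  | leaf _ => True
  | node m l r => (∀ x ∈ l.keys, x < m) ∧ (∀ x ∈ r.keys, m ≤ x) ∧ l.IsBST ∧ r.IsBST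

/-- The list of left/right directions followed by the search for key `k`:
at `node m l r` descend left if `k < m` and right otherwise. -/
def searchDirs : LTree α → α → List TDir
  | leaf _, _ => []
  | node m l r, k =>
      if k < m then TDir.left :: l.searchDirs k else TDir.right :: r.searchDirs k

/-- The key of the leaf reached by the search for key `k`. -/
def searchKey : LTree α → α → α
  | leaf k', _ => k'
  | node m l r, k => if k < m then l.searchKey k else r.searchKey k

/-- The subtree at a given position (list of directions), if it exists. -/
def subtreeAt? : LTree α → List TDir → Option (LTree α)
  | t, [] => some t
  | leaf _, _ :: _ => none
  | node _ l _, TDir.left :: ds => l.subtreeAt? ds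
  | node _ _ r, TDir.right :: ds => r.subtreeAt? ds

/-- The insert edit: replace the leaf (with key `k'`) reached by the search for `k`
with `node (max k k') (leaf (min k k')) (leaf (max k k'))`. -/
def ins : LTree α → α → LTree α
  | leaf k', k => node (max k k') (leaf (min k k')) (leaf (max k k'))
  | node m l r, k => if k < m then node m (l.ins k) r else node m l (r.ins k)

/-- The delete edit: letting `p` be the last internal node on the search path for `k`
and `s` the child of `p` not on the path, replace the subtree rooted at `p` by `s`.
(On a single leaf, where the search path has no internal node, this is a no-op.) -/
def del : LTree α → α → LTree α
  | leaf k', _ => leaf k'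
  | node m l r, k =>
      if k < m then
        match l with
        | leaf _ => r
        | node ml ll lr => node m ((node ml ll lr).del k) r
      else
        match r with
        | leaf _ => l
        | node mr rl rr => node m l ((node mr rl rr).del k)

/-- A tree is internal iff its root is an internal node, i.e., the search path for
any key contains at least one internal node. -/
def isInternal : LTree α → Prop
  | leaf _ => False
  | node _ _ _ => True

end LTree

/-- An operation on the set: insert or delete a key. -/
inductive Op (α : Type) where
  | ins (k : α)
  | del (k : α)

/-- The key of an operation. -/
def Op.key {α : Type} : Op α → α
  | .ins k => k
  | .del k => k

/-- Applying an operation to a leaf-oriented BST: `Ins k` performs the insert edit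
unless the search for `k` already ends at a leaf with key `k`; `Del k` performs the
delete edit if the search for `k` ends at a leaf with key `k`, and otherwise does
nothing. -/
def applyOp {α : Type} [LinearOrder α] (T : LTree α) : Op α → LTree α
  | .ins k => if T.searchKey k = k then T else T.ins k
  | .del k => if T.searchKey k = k then T.del k else T

/-- The abstract set resulting from applying a list of operations, in order, to the
empty set: `F([]) = ∅`, `F(ops ++ [Ins k]) = F(ops) ∪ {k}`,
`F(ops ++ [Del k]) = F(ops) \ {k}`. -/
def opsSet {α : Type} (ops : List (Op α)) : Set α :=
  ops.foldl (fun s op => match op with | .ins k => s ∪ {k} | .del k => s \ {k}) ∅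

/-!
No operation touches the sentinel keys `s1 ≠ s2`, so both sentinel leaves survive every update.
Hence every intermediate tree has two distinct leaves, its root is internal, and a delete edit
never meets the degenerate single-leaf tree. Insert and delete edits preserve the BST property,
and in a BST the search for a leaf key ends at that leaf; so the guards in `applyOp` fire exactly
when the key is already present (for `Ins`) or absent (for `Del`), and each operation acts on the
leaf keys as `∪ {k}` or `\ {k}`. Since no key equals a sentinel, these set updates commute with
`{s1, s2} ∪ ·`, which gives `{s1, s2} ∪ F(ops)`.
-/

namespace LTree

theorem leafKeys_subset_keys {α : Type} : ∀ t : LTree α, t.leafKeys ⊆ t.keys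
  | leaf _ => subset_rfl
  | node _ l r => Set.union_subset_union (Set.subset_union_of_subset_right
      (leafKeys_subset_keys l) _) (leafKeys_subset_keys r)

theorem isInternal_of_pair_subset {α : Type} {t : LTree α} {a b : α} (hab : a ≠ b)
    (h : {a, b} ⊆ t.leafKeys) : t.isInternal := by
  cases t with
  | leaf _ => exact hab ((h (Set.mem_insert a {b})).trans (h (Set.mem_insert_of_mem a rfl)).symm)
  | node _ _ _ => trivial

variable {α : Type} [LinearOrder α]

theorem notMem_leafKeys_right {m k : α} {l r : LTree α} (h : (node m l r).IsBST)
    (hk : k < m) : k ∉ r.leafKeys :=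
  fun hr => (h.2.1 k (leafKeys_subset_keys r hr)).not_gt hk

theorem notMem_leafKeys_left {m k : α} {l r : LTree α} (h : (node m l r).IsBST)
    (hk : ¬k < m) : k ∉ l.leafKeys :=
  fun hl => hk (h.1 k (leafKeys_subset_keys l hl))

theorem searchKey_mem : ∀ (t : LTree α) (k : α), t.searchKey k ∈ t.leafKeys
  | leaf _, _ => rfl
  | node m l r, k => by
    unfold searchKey leafKeys
    split
    · exact Or.inl (searchKey_mem l k)
    · exact Or.inr (searchKey_mem r k)

theorem searchKey_eq_of_mem : ∀ {t : LTree α}, t.IsBST → ∀ {k : α}, k ∈ t.leafKeys →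
    t.searchKey k = k
  | leaf _, _, _, hk => hk.symm
  | node m l r, h, k, hk => by
    unfold searchKey
    split
    case isTrue hkm =>
      exact searchKey_eq_of_mem h.2.2.1 (hk.resolve_right (notMem_leafKeys_right h hkm))
    case isFalse hkm =>
      exact searchKey_eq_of_mem h.2.2.2 (hk.resolve_left (notMem_leafKeys_left h hkm))

theorem leafKeys_ins : ∀ (t : LTree α) (k : α), (t.ins k).leafKeys = t.leafKeys ∪ {k}
  | leaf k', k => by
    ext x
    simp only [ins, leafKeys, Set.mem_union, Set.mem_singleton_iff]
    grind
  | node m l r, k => by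
    unfold ins
    split <;> simp only [leafKeys, leafKeys_ins] <;> grind

theorem keys_ins : ∀ (t : LTree α) (k : α), (t.ins k).keys = t.keys ∪ {k}
  | leaf k', k => by
    ext x
    simp only [ins, keys, Set.mem_union, Set.mem_singleton_iff]
    grind
  | node m l r, k => by
    unfold ins
    split <;> simp only [keys, keys_ins] <;> grind

theorem isBST_ins : ∀ {t : LTree α} {k : α}, t.IsBST → t.searchKey k ≠ k → (t.ins k).IsBST
  | leaf k', k, _, hne => by
    have hkk : k ≠ k' := fun h => hne h.symm
    refine ⟨?_, ?_, trivial, trivial⟩ <;> rintro x rfl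
    exacts [min_lt_max.mpr hkk, le_rfl]
  | node m l r, k, ⟨hl, hr, bl, br⟩, hne => by
    unfold searchKey at hne
    unfold ins
    split
    case isTrue hkm =>
      rw [if_pos hkm] at hne
      refine ⟨?_, hr, isBST_ins bl hne, br⟩
      rw [keys_ins]
      rintro x (hx | rfl)
      exacts [hl x hx, hkm]
    case isFalse hkm =>
      rw [if_neg hkm] at hne
      refine ⟨hl, ?_, bl, isBST_ins br hne⟩
      rw [keys_ins]
      rintro x (hx | rfl)
      exacts [hr x hx, not_lt.mp hkm]

theorem keys_del_subset (t : LTree α) (k : α) : (t.del k).keys ⊆ t.keys := by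
  induction t with
  | leaf _ => simp [del]
  | node m l r ihl ihr =>
    unfold del
    split
    · split
      · exact Set.subset_union_right
      · exact Set.union_subset_union_left _ (Set.union_subset_union_right _ ihl)
    · split
      · exact fun _ hx => Or.inl (Or.inr hx)
      · exact Set.union_subset_union_right _ ihr

theorem isBST_del (t : LTree α) (k : α) (h : t.IsBST) : (t.del k).IsBST := by
  induction t with
  | leaf _ => simpa [del] using h
  | node m l r ihl ihr =>
    obtain ⟨hl, hr, bl, br⟩ := h
    unfold del
    split
    · split
      · exact br
      · exact ⟨fun x hx => hl x (keys_del_subset _ k hx), hr, ihl bl, br⟩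
    · split
      · exact bl
      · exact ⟨hl, fun x hx => hr x (keys_del_subset _ k hx), bl, ihr br⟩

theorem leafKeys_del (t : LTree α) (k : α) (hb : t.IsBST) (hint : t.isInternal)
    (hs : t.searchKey k = k) : (t.del k).leafKeys = t.leafKeys \ {k} := by
  induction t with
  | leaf _ => exact hint.elim
  | node m l r ihl ihr =>
    have hdiff : ∀ s : Set α, k ∉ s → s = s \ {k} := fun s hk =>
      (Set.sdiff_singleton_eq_self hk).symm
    unfold searchKey at hs
    unfold del
    split
    case isTrue hkm =>
      rw [if_pos hkm] at hs
      have hr := hdiff _ (notMem_leafKeys_right hb hkm)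
      split
      case h_1 j =>
        obtain rfl : j = k := hs
        simp only [leafKeys, Set.union_sdiff_distrib, Set.sdiff_self, Set.empty_union, ← hr]
      case h_2 =>
        simp only [leafKeys, ihl hb.2.2.1 trivial hs, Set.union_sdiff_distrib, ← hr]
    case isFalse hkm =>
      rw [if_neg hkm] at hs
      have hl := hdiff _ (notMem_leafKeys_left hb hkm)
      split
      case h_1 j =>
        obtain rfl : j = k := hs
        simp only [leafKeys, Set.union_sdiff_distrib, Set.sdiff_self, Set.union_empty, ← hl]
      case h_2 =>
        simp only [leafKeys, ihr hb.2.2.2 trivial hs, Set.union_sdiff_distrib, ← hl]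

end LTree

section

variable {α : Type}

def Op.applySet (s : Set α) : Op α → Set α
  | .ins k => s ∪ {k}
  | .del k => s \ {k}

theorem opsSet_eq_foldl (ops : List (Op α)) : opsSet ops = ops.foldl Op.applySet ∅ := rfl

theorem Op.applySet_union {A : Set α} (S : Set α) {op : Op α} (h : op.key ∉ A) :
    op.applySet (A ∪ S) = A ∪ op.applySet S := by
  cases op with
  | ins k => exact Set.union_assoc _ _ _
  | del k =>
    rw [applySet, applySet, Set.union_sdiff_distrib, Set.sdiff_singleton_eq_self (a := k) h]

theorem Op.subset_applySet {A S : Set α} (hA : A ⊆ S) {op : Op α} (h : op.key ∉ A) :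
    A ⊆ op.applySet S := by
  rw [← Set.union_eq_self_of_subset_left hA, applySet_union S h]
  exact Set.subset_union_left

theorem foldl_applySet_union {A : Set α} :
    ∀ (S : Set α) (ops : List (Op α)), (∀ op ∈ ops, op.key ∉ A) →
      ops.foldl Op.applySet (A ∪ S) = A ∪ ops.foldl Op.applySet S
  | _, [], _ => rfl
  | S, op :: ops, h => by
    rw [List.foldl_cons, List.foldl_cons, Op.applySet_union S (h op List.mem_cons_self),
      foldl_applySet_union _ ops fun o ho => h o (List.mem_cons_of_mem _ ho)]

section applyOp

variable [LinearOrder α]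

theorem isBST_applyOp {T : LTree α} (hT : T.IsBST) (op : Op α) : (applyOp T op).IsBST := by
  cases op with
  | ins k =>
    dsimp only [applyOp]
    split
    exacts [hT, LTree.isBST_ins hT ‹_›]
  | del k =>
    dsimp only [applyOp]
    split
    exacts [T.isBST_del k hT, hT]

theorem leafKeys_applyOp {T : LTree α} (hT : T.IsBST) (hint : T.isInternal) (op : Op α) :
    (applyOp T op).leafKeys = op.applySet T.leafKeys := by
  cases op with
  | ins k =>
    dsimp only [applyOp, Op.applySet]
    split
    case isTrue hk => rw [Set.union_singleton, Set.insert_eq_of_mem (hk ▸ T.searchKey_mem k)]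
    case isFalse => exact T.leafKeys_ins k
  | del k =>
    dsimp only [applyOp, Op.applySet]
    split
    case isTrue hk => exact T.leafKeys_del k hT hint hk
    case isFalse hk =>
      exact (Set.sdiff_singleton_eq_self fun hm => hk (LTree.searchKey_eq_of_mem hT hm)).symm

theorem foldl_applyOp_invariant {a b : α} (hab : a ≠ b) :
    ∀ (ops : List (Op α)) {T : LTree α}, (∀ op ∈ ops, op.key ∉ ({a, b} : Set α)) →
      T.IsBST → {a, b} ⊆ T.leafKeys →
      (ops.foldl applyOp T).IsBST ∧ {a, b} ⊆ (ops.foldl applyOp T).leafKeys ∧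
        (ops.foldl applyOp T).leafKeys = ops.foldl Op.applySet T.leafKeys
  | [], _, _, hT, hsub => ⟨hT, hsub, rfl⟩
  | op :: ops, T, h, hT, hsub => by
    have hkeys := leafKeys_applyOp hT (LTree.isInternal_of_pair_subset hab hsub) op
    rw [List.foldl_cons, List.foldl_cons, ← hkeys]
    refine foldl_applyOp_invariant hab ops (fun o ho => h o (List.mem_cons_of_mem _ ho))
      (isBST_applyOp hT op) ?_
    rw [hkeys]
    exact Op.subset_applySet hsub (h op List.mem_cons_self)

end applyOp

end

/-- Starting from the tree `node(s2, leaf(s1), leaf(s2))` with sentinel keys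
`s1 < s2`, applying any list of operations with keys `< s1` is well-defined (every
delete edit performed happens on a tree whose search path for the deleted key
contains an internal node), preserves the BST property, and yields a tree whose
leaf keys are exactly `{s1, s2}` together with the abstract set of the operations. -/
theorem stmt12 {α : Type} [LinearOrder α] (s1 s2 : α) (h12 : s1 < s2)
    (ops : List (Op α)) (hkeys : ∀ op ∈ ops, op.key < s1) :
    (∀ (n : ℕ) (hn : n < ops.length) (k : α),
        ops.get ⟨n, hn⟩ = Op.del k →
        ((ops.take n).foldl applyOp
            (LTree.node s2 (LTree.leaf s1) (LTree.leaf s2))).searchKey k = k →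
        ((ops.take n).foldl applyOp
            (LTree.node s2 (LTree.leaf s1) (LTree.leaf s2))).isInternal) ∧
      (ops.foldl applyOp (LTree.node s2 (LTree.leaf s1) (LTree.leaf s2))).IsBST ∧
      (ops.foldl applyOp
          (LTree.node s2 (LTree.leaf s1) (LTree.leaf s2))).leafKeys =
        {s1, s2} ∪ opsSet ops := by
  have hsent : ∀ op ∈ ops, op.key ∉ ({s1, s2} : Set α) := fun op hop hmem =>
    hmem.elim (hkeys op hop).ne fun h => ((hkeys op hop).trans h12).ne h
  have hBST : (LTree.node s2 (LTree.leaf s1) (LTree.leaf s2)).IsBST :=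
    ⟨fun _ hx => (hx : _ = s1) ▸ h12, fun _ hx => (hx : _ = s2) ▸ le_rfl, trivial, trivial⟩
  have hleaves : (LTree.node s2 (LTree.leaf s1) (LTree.leaf s2)).leafKeys = {s1, s2} :=
    Set.singleton_union
  have hinv :=
    foldl_applyOp_invariant h12.ne (T := LTree.node s2 (LTree.leaf s1) (LTree.leaf s2))
  refine ⟨fun n _ _ _ _ => ?_, (hinv ops hsent hBST hleaves.ge).1, ?_⟩
  · exact LTree.isInternal_of_pair_subset h12.ne (hinv (ops.take n)
      (fun op hop => hsent op (List.mem_of_mem_take hop)) hBST hleaves.ge).2.1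
  · rw [(hinv ops hsent hBST hleaves.ge).2.2, hleaves, opsSet_eq_foldl,
      ← foldl_applySet_union _ ops hsent, Set.union_empty]
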